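/- arXiv:1108.3638 — 3 statements merged into one kernel-verified Lean document; each statement's English description precedes it below -/
import Mathlib

section
/- Let (P, ≤, s) be a word poset over alphabet S with commutation relation R, and let e : P → {1,...,m} be a linear extension (an order-preserving bijection, where m = |P|). Define the word w(e) by w(e)_i = s(e⁻¹(i)). Then for any two linear extensions e, e' of P, the words w(e) and w(e') lie in the same commutation class. -/
def SwapStep {S : Type*} (R : S → S → Prop) (u v : List S) : Prop :=
  ∃ (x y : List S) (a b : S), R a b ∧ u = x ++ a :: b :: y ∧ v = x ++ b :: a :: y

def CommEquiv {S : Type*} (R : S → S → Prop) : List S → List S → Prop :=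
  Relation.ReflTransGen (SwapStep R)

/-- `(P, s)` is a word poset over alphabet `S` with commutation relation `R`:
(a) elements with equal or non-commuting labels are comparable;
(b) labels of elements in a covering relation are equal or do not commute. -/
def IsWordPoset {S : Type*} (R : S → S → Prop) {P : Type*} [PartialOrder P]
    (s : P → S) : Prop :=
  (∀ x y : P, (s x = s y ∨ ¬ R (s x) (s y)) → x ≤ y ∨ y ≤ x) ∧
  (∀ x y : P, x ⋖ y → s x = s y ∨ ¬ R (s x) (s y))

/-!
Incomparable elements of a word poset carry commuting letters, so it suffices to connect the two
linear extensions, viewed as lists of elements of `P`, by swaps of adjacent incomparable elements.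
Induct on the second list: its head `x` lies somewhere in the first list, and every element before
it there is incomparable to `x` (it precedes `x` in one extension and follows it in the other),
so `x` can be moved to the front one swap at a time.
-/

namespace CommEquiv

variable {S : Type*} {R : S → S → Prop}

theorem append_left (w : List S) {u v : List S} (h : CommEquiv R u v) :
    CommEquiv R (w ++ u) (w ++ v) := by
  refine Relation.ReflTransGen.lift (w ++ ·) ?_ _ _ h
  rintro _ _ ⟨x, y, a, b, hR, rfl, rfl⟩
  exact ⟨w ++ x, y, a, b, hR, by simp, by simp⟩

theorem append_right (w : List S) {u v : List S} (h : CommEquiv R u v) :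
    CommEquiv R (u ++ w) (v ++ w) := by
  refine Relation.ReflTransGen.lift (· ++ w) ?_ _ _ h
  rintro _ _ ⟨x, y, a, b, hR, rfl, rfl⟩
  exact ⟨x, y ++ w, a, b, hR, by simp, by simp⟩

theorem map {P : Type*} {Q : P → P → Prop} (s : P → S) (hQR : ∀ a b, Q a b → R (s a) (s b))
    {u v : List P} (h : CommEquiv Q u v) : CommEquiv R (u.map s) (v.map s) := by
  refine Relation.ReflTransGen.lift (List.map s) ?_ _ _ h
  rintro _ _ ⟨x, y, a, b, hR, rfl, rfl⟩
  exact ⟨x.map s, y.map s, s a, s b, hQR a b hR, by simp, by simp⟩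

theorem append_singleton_cons {x : S} :
    ∀ {A : List S}, (∀ a ∈ A, R a x) → CommEquiv R (A ++ [x]) (x :: A)
  | [], _ => Relation.ReflTransGen.refl
  | a :: A, hA => by
    have hsuffix : CommEquiv R (a :: (A ++ [x])) (a :: x :: A) :=
      append_left [a] (append_singleton_cons fun b hb => hA b (List.mem_cons_of_mem a hb))
    exact Relation.ReflTransGen.tail hsuffix ⟨[], A, a, x, hA a List.mem_cons_self, rfl, rfl⟩

end CommEquiv

theorem List.commEquiv_incompRel_of_perm {α : Type*} [Preorder α] :
    ∀ {L L' : List α}, L.Pairwise (fun a b => ¬ b ≤ a) → L'.Pairwise (fun a b => ¬ b ≤ a) →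
      L.Perm L' → CommEquiv (IncompRel (· ≤ ·)) L L'
  | L, [], _, _, hperm => by rw [List.perm_nil.mp hperm]; exact Relation.ReflTransGen.refl
  | L, x :: M', hL, hL', hperm => by
    obtain ⟨A, B, rfl⟩ := List.append_of_mem (hperm.mem_iff.mpr List.mem_cons_self)
    have hAx : ∀ a ∈ A, IncompRel (· ≤ ·) a x := by
      intro a ha
      have hxa : ¬ x ≤ a := hL.rel_of_mem_append ha List.mem_cons_self
      have haM' : a ∈ M' := by
        rcases List.mem_cons.mp (hperm.subset (List.mem_append_left _ ha)) with rfl | h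
        · exact absurd le_rfl hxa
        · exact h
      exact ⟨(List.pairwise_cons.mp hL').1 a haM', hxa⟩
    have hAB : (A ++ B).Pairwise (fun a b => ¬ b ≤ a) :=
      hL.sublist ((List.sublist_cons_self x B).append_left A)
    have hpermAB : (A ++ B).Perm M' := (List.perm_cons x).mp (List.perm_middle.symm.trans hperm)
    have hfront : CommEquiv (IncompRel (· ≤ ·)) (A ++ [x] ++ B) (x :: A ++ B) :=
      CommEquiv.append_right B (CommEquiv.append_singleton_cons hAx)
    rw [← List.singleton_append, ← List.append_assoc]
    exact Relation.ReflTransGen.trans hfront (CommEquiv.append_left [x]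
      (commEquiv_incompRel_of_perm hAB (List.pairwise_cons.mp hL').2 hpermAB))

theorem Monotone.pairwise_ofFn_symm {α : Type*} [Preorder α] {m : ℕ} {e : α ≃ Fin m}
    (he : Monotone e) : (List.ofFn e.symm).Pairwise (fun a b => ¬ b ≤ a) := by
  rw [List.pairwise_ofFn]
  intro i j hij hji
  have := he hji
  simp only [Equiv.apply_symm_apply] at this
  exact this.not_gt hij

theorem List.ofFn_symm_perm {α : Type*} {m : ℕ} (e e' : α ≃ Fin m) :
    (List.ofFn e.symm).Perm (List.ofFn e'.symm) :=
  (List.perm_ext_iff_of_nodup (List.nodup_ofFn.mpr e.symm.injective)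
    (List.nodup_ofFn.mpr e'.symm.injective)).mpr fun a => by
      simp only [List.mem_ofFn', e.symm.surjective.range_eq, e'.symm.surjective.range_eq]

theorem IsWordPoset.rel_of_incompRel {S : Type*} {R : S → S → Prop} {P : Type*} [PartialOrder P]
    {s : P → S} (hwp : IsWordPoset R s) {x y : P} (hxy : IncompRel (· ≤ ·) x y) :
    R (s x) (s y) := by
  by_contra hR
  rcases hwp.1 x y (Or.inr hR) with h | h
  exacts [hxy.1 h, hxy.2 h]

theorem stmt1_general {S : Type*} (R : S → S → Prop) {P : Type*} [PartialOrder P]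
    {m : ℕ} (s : P → S) (hwp : IsWordPoset R s)
    (e e' : P ≃ Fin m) (he : Monotone ⇑e) (he' : Monotone ⇑e') :
    CommEquiv R (List.ofFn fun i => s (e.symm i)) (List.ofFn fun i => s (e'.symm i)) := by
  simpa only [List.map_ofFn, Function.comp_def] using
    CommEquiv.map s (fun _ _ => hwp.rel_of_incompRel)
      (List.commEquiv_incompRel_of_perm he.pairwise_ofFn_symm he'.pairwise_ofFn_symm
        (List.ofFn_symm_perm e e'))

theorem stmt1 {S : Type*} (R : S → S → Prop) {P : Type*} [PartialOrder P] [Fintype P]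
    {m : ℕ} (hm : Fintype.card P = m) (s : P → S) (hwp : IsWordPoset R s)
    (e e' : P ≃ Fin m) (he : Monotone ⇑e) (he' : Monotone ⇑e') :
    CommEquiv R (List.ofFn fun i => s (e.symm i)) (List.ofFn fun i => s (e'.symm i)) :=
  stmt1_general R s hwp e e' he he'
end

section
/- Let (P, ≤, s) be a word poset with m elements and let w be the word obtained from some linear extension of P. Then the map sending a linear extension e of P to the word w(e) given by w(e)_i = s(e⁻¹(i)) is a bijection from the set of linear extensions of P onto the commutation class of w. -/
/-
Read a linear extension `e` as the list `e⁻¹(0), …, e⁻¹(m-1)` of the elements of `P`, which never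
lists an element before a smaller one (`List.Pairwise fun a b => ¬ b < a`); its word is that list
relabelled by `s`. Two linear extensions are connected by commutations: the first element of one is
preceded in the other only by elements incomparable to it, whose letters commute with its letter by
the first word-poset axiom, so it can be moved to the front. Equal words give equal extensions,
because elements with equal labels are comparable. Conversely, a commutation of two adjacent letters
either swaps two incomparable elements, which yields a new linear extension, or acts on a pair
`x < y` adjacent in a linear extension, hence a cover, and then the second axiom forces the two letters
to be equal.
-/

section
variable {S : Type*} {R : S → S → Prop} {P : Type*} [PartialOrder P] {s : P → S}

theorem SwapStep.cons {u v : List S} (a : S) (h : SwapStep R u v) :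
    SwapStep R (a :: u) (a :: v) := by
  obtain ⟨x, y, b, c, hbc, rfl, rfl⟩ := h
  exact ⟨a :: x, y, b, c, hbc, rfl, rfl⟩

theorem CommEquiv.cons {u v : List S} (a : S) (h : CommEquiv R u v) :
    CommEquiv R (a :: u) (a :: v) :=
  Relation.ReflTransGen.lift (a :: ·) (fun _ _ => SwapStep.cons a) _ _ h

theorem CommEquiv.append_cons_of_forall_rel {u : List S} {b : S} (w : List S)
    (h : ∀ a ∈ u, R a b) : CommEquiv R (u ++ b :: w) (b :: (u ++ w)) := by
  induction u with
  | nil => exact Relation.ReflTransGen.refl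
  | cons a u ih =>
    rw [List.forall_mem_cons] at h
    exact (ih h.2).cons a |>.tail ⟨[], u ++ w, a, b, h.1, rfl, rfl⟩

theorem IsWordPoset.rel_of_not_le_of_not_le (hwp : IsWordPoset R s) (x y : P)
    (hxy : ¬ x ≤ y) (hyx : ¬ y ≤ x) : R (s x) (s y) := by
  by_contra h
  exact (hwp.1 x y (Or.inr h)).elim hxy hyx

theorem IsWordPoset.le_or_le_of_eq (hwp : IsWordPoset R s) (x y : P) (h : s x = s y) :
    x ≤ y ∨ y ≤ x :=
  hwp.1 x y (Or.inl h)

theorem commEquiv_map_of_perm (hR : ∀ x y : P, ¬ x ≤ y → ¬ y ≤ x → R (s x) (s y))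
    {l l' : List P} (hperm : l.Perm l') (hnd : l.Nodup)
    (hl : l.Pairwise (fun a b => ¬ b < a)) (hl' : l'.Pairwise (fun a b => ¬ b < a)) :
    CommEquiv R (l.map s) (l'.map s) := by
  induction l' generalizing l with
  | nil => rw [List.perm_nil.mp hperm]; exact .refl
  | cons x t ih =>
    obtain ⟨l₁, l₂, rfl⟩ := List.append_of_mem (hperm.mem_iff.mpr List.mem_cons_self)
    have hperm' : (l₁ ++ l₂).Perm t := (List.perm_middle.symm.trans hperm).cons_inv
    have hsub : (l₁ ++ l₂).Sublist (l₁ ++ x :: l₂) := (List.sublist_cons_self x l₂).append_left l₁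
    rw [List.pairwise_cons] at hl'
    have hrel : ∀ a ∈ l₁.map s, R a (s x) := by
      simp only [List.forall_mem_map]
      intro y hy
      have hyx : y ≠ x := hnd.rel_of_mem_append hy List.mem_cons_self
      have hyt : y ∈ t := List.mem_of_ne_of_mem hyx (hperm.subset (List.mem_append_left _ hy))
      refine hR y x (fun hle => hl'.1 y hyt (lt_of_le_of_ne hle hyx)) fun hle => ?_
      exact hl.rel_of_mem_append hy List.mem_cons_self (lt_of_le_of_ne hle hyx.symm)
    rw [List.map_append, List.map_cons]
    refine (CommEquiv.append_cons_of_forall_rel _ hrel).trans ?_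
    rw [← List.map_append]
    exact (ih hperm' (hnd.sublist hsub) (hl.sublist hsub) hl'.2).cons _

theorem eq_of_perm_of_map_eq (hs : ∀ x y : P, s x = s y → x ≤ y ∨ y ≤ x)
    {l l' : List P} (hperm : l.Perm l')
    (hl : l.Pairwise (fun a b => ¬ b < a)) (hl' : l'.Pairwise (fun a b => ¬ b < a))
    (hmap : l.map s = l'.map s) : l = l' := by
  induction l generalizing l' with
  | nil => exact (List.nil_perm.mp hperm).symm
  | cons x t ih =>
    obtain _ | ⟨y, t'⟩ := l'
    · exact absurd hperm.length_eq (by simp)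
    rw [List.map_cons, List.map_cons, List.cons.injEq] at hmap
    rw [List.pairwise_cons] at hl hl'
    obtain rfl : x = y := by
      by_contra hne
      have hyt : y ∈ t := List.mem_of_ne_of_mem (Ne.symm hne) (hperm.mem_iff.mpr List.mem_cons_self)
      have hxt' : x ∈ t' := List.mem_of_ne_of_mem hne (hperm.mem_iff.mp List.mem_cons_self)
      rcases hs x y hmap.1 with hle | hle
      · exact hl'.1 x hxt' (lt_of_le_of_ne hle hne)
      · exact hl.1 y hyt (lt_of_le_of_ne hle (Ne.symm hne))
    rw [ih hperm.cons_inv hl.2 hl'.2 hmap.2]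

theorem exists_perm_map_eq_of_swapStep (hcov : ∀ x y : P, x ⋖ y → s x = s y ∨ ¬ R (s x) (s y))
    {l : List P} (hall : ∀ z, z ∈ l) (hl : l.Pairwise (fun a b => ¬ b < a)) {v : List S}
    (hstep : SwapStep R (l.map s) v) :
    ∃ l' : List P, l'.Perm l ∧ l'.Pairwise (fun a b => ¬ b < a) ∧ l'.map s = v := by
  obtain ⟨u, w, a, b, hab, hlu, rfl⟩ := hstep
  obtain ⟨l₁, l₂', rfl, rfl, hl₂'⟩ := List.map_eq_append_iff.mp hlu
  obtain ⟨p, l₂'', rfl, rfl, hl₂''⟩ := List.map_eq_cons_iff.mp hl₂'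
  obtain ⟨q, l₂, rfl, rfl, rfl⟩ := List.map_eq_cons_iff.mp hl₂''
  by_cases hpq : p < q
  · have hpq_cov : p ⋖ q := by
      refine ⟨hpq, fun z hpz hzq => ?_⟩
      rcases List.mem_append.mp (hall z) with hz | hz
      · exact hl.rel_of_mem_append hz List.mem_cons_self hpz
      · simp only [List.mem_cons] at hz
        rcases hz with rfl | rfl | hz
        · exact lt_irrefl _ hpz
        · exact lt_irrefl _ hzq
        · exact List.rel_of_pairwise_cons
            (List.pairwise_cons.mp (hl.sublist (List.sublist_append_right l₁ _))).2 hz hzq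
    have heq := (hcov p q hpq_cov).resolve_right (not_not.mpr hab)
    exact ⟨_, List.Perm.refl _, hl, by simp [heq]⟩
  · refine ⟨l₁ ++ q :: p :: l₂, (List.Perm.swap p q l₂).append_left l₁, ?_, by simp⟩
    simp only [List.pairwise_append, List.pairwise_cons, List.mem_cons, forall_eq_or_imp] at hl ⊢
    obtain ⟨h₁, ⟨⟨-, hp₂⟩, hq₂, h₂⟩, h₁₂⟩ := hl
    exact ⟨h₁, ⟨⟨hpq, hq₂⟩, hp₂, h₂⟩, fun a ha => ⟨(h₁₂ a ha).2.1, (h₁₂ a ha).1, (h₁₂ a ha).2.2⟩⟩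

end

section
variable {P : Type*} {m : ℕ}

theorem monotone_iff_pairwise_ofFn_symm [PartialOrder P] (e : P ≃ Fin m) :
    Monotone e ↔ (List.ofFn e.symm).Pairwise (fun a b => ¬ b < a) := by
  rw [List.pairwise_ofFn]
  constructor
  · intro he i j hij hji
    exact (he hji.le).not_gt (by simpa using hij)
  · intro h a b hab
    by_contra hlt
    have hab' : ¬ a < b := by simpa using h (not_le.mp hlt)
    exact hlt (hab.eq_of_not_lt hab' ▸ le_rfl)

theorem perm_ofFn_of_equiv (f g : Fin m ≃ P) : (List.ofFn f).Perm (List.ofFn g) := by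
  convert (Equiv.Perm.ofFn_comp_perm (g.trans f.symm) f).symm using 2
  ext
  simp

theorem exists_equiv_ofFn_eq_of_perm {l : List P} (f : Fin m ≃ P) (h : l.Perm (List.ofFn f)) :
    ∃ g : Fin m ≃ P, List.ofFn g = l := by
  have hlen : m = l.length := by simpa using h.length_eq.symm
  have hnd : l.Nodup := h.nodup_iff.mpr (List.nodup_ofFn.mpr f.injective)
  have hall : ∀ x, x ∈ l := fun x => h.mem_iff.mpr (List.mem_ofFn.mpr (f.surjective x))
  classical
  subst hlen
  exact ⟨hnd.getEquivOfForallMemList l hall, List.ofFn_get l⟩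

end

theorem stmt2_general {S : Type*} (R : S → S → Prop) {P : Type*} [PartialOrder P]
    {m : ℕ} (s : P → S) (hwp : IsWordPoset R s)
    (e₀ : P ≃ Fin m) (he₀ : Monotone ⇑e₀) :
    Set.BijOn (fun e : P ≃ Fin m => List.ofFn fun i => s (e.symm i))
      {e : P ≃ Fin m | Monotone ⇑e}
      {v : List S | CommEquiv R (List.ofFn fun i => s (e₀.symm i)) v} := by
  have pw (e : P ≃ Fin m) := (monotone_iff_pairwise_ofFn_symm e).mp
  simp only [List.ofFn_comp']
  refine ⟨fun e he => ?_, fun e he e' he' hw => ?_, fun v hv => ?_⟩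
  · exact commEquiv_map_of_perm hwp.rel_of_not_le_of_not_le (perm_ofFn_of_equiv _ _)
      (List.nodup_ofFn.mpr e₀.symm.injective) (pw e₀ he₀) (pw e he)
  · have hl := eq_of_perm_of_map_eq hwp.le_or_le_of_eq (perm_ofFn_of_equiv _ _)
      (pw e he) (pw e' he') hw
    exact Equiv.symm_bijective.injective (DFunLike.coe_injective (List.ofFn_injective hl))
  · induction hv with
    | refl => exact ⟨e₀, he₀, rfl⟩
    | tail _ hstep ih =>
      obtain ⟨e, he, rfl⟩ := ih
      obtain ⟨l, hperm, hl, rfl⟩ := exists_perm_map_eq_of_swapStep hwp.2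
        (fun z => List.mem_ofFn.mpr (e.symm.surjective z)) (pw e he) hstep
      obtain ⟨g, rfl⟩ := exists_equiv_ofFn_eq_of_perm e.symm hperm
      exact ⟨g.symm, (monotone_iff_pairwise_ofFn_symm g.symm).mpr hl, rfl⟩

/-- The map `e ↦ w(e)`, where `w(e)_i = s(e⁻¹(i))`, is a bijection from the set of
linear extensions of the word poset `P` onto the commutation class of the word `w`
arising from any fixed linear extension `e₀`. -/
theorem stmt2 {S : Type*} (R : S → S → Prop) {P : Type*} [PartialOrder P] [Fintype P]
    {m : ℕ} (hm : Fintype.card P = m) (s : P → S) (hwp : IsWordPoset R s)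
    (e₀ : P ≃ Fin m) (he₀ : Monotone ⇑e₀) :
    Set.BijOn (fun e : P ≃ Fin m => List.ofFn fun i => s (e.symm i))
      {e : P ≃ Fin m | Monotone ⇑e}
      {v : List S | CommEquiv R (List.ofFn fun i => s (e₀.symm i)) v} :=
  stmt2_general R s hwp e₀ he₀
end

section
/- For every word w of length m over alphabet S with commutation relation R, there exists a word poset (P, ≤, s) with m elements whose set of linear extensions corresponds bijectively (via e ↦ w(e)) to the commutation class of w. Concretely, one may take P = {1,...,m} with s(i) = w_i and x ≤ y the transitive closure of the relation: i ⪯ j whenever i ≤ j as integers and w_i, w_j are equal or do not commute. -/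
/-- The heap order on the positions of the word `w : Fin m → S`: the transitive
(and reflexive) closure of `i ⪯ j` whenever `i ≤ j` and the letters `w i`, `w j`
are equal or do not commute. -/
def HeapLE {S : Type*} (R : S → S → Prop) {m : ℕ} (w : Fin m → S) :
    Fin m → Fin m → Prop :=
  Relation.ReflTransGen (fun i j => i ≤ j ∧ (w i = w j ∨ ¬ R (w i) (w j)))

/-!
Every generating step of the heap order moves forward in `w`, so the order is antisymmetric.

A linear extension `e` other than the identity has an adjacent descent; the two letters there are
not heap-comparable, hence distinct and commuting, and swapping them gives a linear extension with
one inversion fewer. Thus the word of `e` is reached from `w` by commutations. Conversely, swapping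
two adjacent commuting letters in the word of a linear extension gives again a linear extension: the
two positions are adjacent in `e`, so they could only be heap-related through a cover, and covers
join equal or non-commuting letters. Finally, equal letters are heap-comparable, so every linear
extension keeps the occurrences of each letter in their original order; this recovers `e` from its
word.
-/

namespace List

theorem ofFn_eq_take_append_cons_cons {α : Type*} {m : ℕ} (f : Fin m → α) {p q : Fin m}
    (hpq : (q : ℕ) = p + 1) :
    ofFn f = (ofFn f).take p ++ f p :: f q :: (ofFn f).drop (p + 2) := by
  obtain ⟨q, hq⟩ := q
  subst hpq
  conv_lhs => rw [← take_append_drop p (ofFn f), drop_eq_getElem_cons (by simp),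
    drop_eq_getElem_cons (by simpa)]
  simp only [List.getElem_ofFn, Fin.eta]

theorem ofFn_comp_swap {α : Type*} {m : ℕ} (f : Fin m → α) {p q : Fin m}
    (hpq : (q : ℕ) = p + 1) :
    ofFn (f ∘ Equiv.swap p q) = (ofFn f).take p ++ f q :: f p :: (ofFn f).drop (p + 2) := by
  have hfix (k : ℕ) (hk : k < m) (hkp : k ≠ p) (hkq : k ≠ q) :
      f (Equiv.swap p q ⟨k, hk⟩) = f ⟨k, hk⟩ :=
    congrArg f (Equiv.swap_apply_of_ne_of_ne (Fin.ne_of_val_ne hkp) (Fin.ne_of_val_ne hkq))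
  rw [ofFn_eq_take_append_cons_cons _ hpq]
  simp only [Function.comp_apply, Equiv.swap_apply_left, Equiv.swap_apply_right]
  congr 1
  · apply ext_getElem (by simp)
    intro k hk _
    simp only [getElem_take, List.getElem_ofFn, Function.comp_apply]
    simp only [length_take, length_ofFn] at hk
    exact hfix _ _ (by omega) (by omega)
  · congr 2
    apply ext_getElem (by simp)
    intro k hk _
    simp only [getElem_drop, List.getElem_ofFn, Function.comp_apply]
    simp only [length_drop, length_ofFn] at hk
    exact hfix _ _ (by omega) (by omega)

end List

theorem Fin.swap_lt_swap {m : ℕ} {p q x y : Fin m} (hpq : (q : ℕ) = p + 1) (hxy : x < y)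
    (hne : ¬(x = p ∧ y = q)) : Equiv.swap p q x < Equiv.swap p q y := by
  rw [Fin.lt_def] at hxy ⊢
  simp only [Equiv.swap_apply_def]
  split_ifs <;> simp only [Fin.ext_iff] at * <;> omega

theorem Fin.exists_le_of_not_strictMono {α : Type*} [LinearOrder α] {m : ℕ} {f : Fin m → α}
    (h : ¬StrictMono f) : ∃ p q : Fin m, (q : ℕ) = p + 1 ∧ f q ≤ f p := by
  cases m with
  | zero => exact absurd (fun a => a.elim0) h
  | succ n =>
    rw [Fin.strictMono_iff_lt_succ] at h
    obtain ⟨i, hi⟩ := not_forall.1 h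
    exact ⟨i.castSucc, i.succ, rfl, not_lt.1 hi⟩

theorem Fin.equiv_eq_refl_of_strictMono {m : ℕ} {e : Fin m ≃ Fin m} (h : StrictMono e) :
    e = Equiv.refl _ :=
  Equiv.ext fun i => Fin.ext (Fin.coe_orderIso_apply (h.orderIsoOfSurjective e e.surjective) i)

section Words

variable {S : Type*} {R : S → S → Prop} {m : ℕ}

theorem swapStep_ofFn_iff {f : Fin m → S} {v : List S} :
    SwapStep R (List.ofFn f) v ↔ ∃ p q : Fin m,
      (q : ℕ) = p + 1 ∧ R (f p) (f q) ∧ v = List.ofFn (f ∘ Equiv.swap p q) := by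
  constructor
  · rintro ⟨x, y, a, b, hR, hf, rfl⟩
    have hm : x.length + 2 + y.length = m := by
      have := congrArg List.length hf
      simp only [List.length_ofFn, List.length_append, List.length_cons] at this
      omega
    let p : Fin m := ⟨x.length, by omega⟩
    let q : Fin m := ⟨x.length + 1, by omega⟩
    have ha : f p = a := by
      simpa [p, show x.length < m by omega] using congrArg (·[x.length]?) hf
    have hb : f q = b := by
      simpa [q, show x.length + 1 < m by omega] using congrArg (·[x.length + 1]?) hf
    refine ⟨p, q, rfl, ha ▸ hb ▸ hR, ?_⟩
    rw [List.ofFn_comp_swap f rfl, hf, ha, hb]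
    simp [p]
  · rintro ⟨p, q, hpq, hR, rfl⟩
    exact ⟨_, _, _, _, hR, List.ofFn_eq_take_append_cons_cons f hpq, List.ofFn_comp_swap f hpq⟩

end Words

namespace HeapLE

variable {S : Type*} {R : S → S → Prop} {m : ℕ} {w : Fin m → S} {i j : Fin m}

theorem le (h : HeapLE R w i j) : i ≤ j := by
  induction h with
  | refl => rfl
  | tail _ step ih => exact ih.trans step.1

theorem antisymm (h : HeapLE R w i j) (h' : HeapLE R w j i) : i = j :=
  le_antisymm h.le h'.le

theorem isPartialOrder : IsPartialOrder (Fin m) (HeapLE R w) :=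
  { (inferInstance : IsPreorder (Fin m) (Relation.ReflTransGen _)) with
    antisymm := fun _ _ => antisymm }

theorem total_of_eq_or_not_rel (hsymm : Symmetric R) (h : w i = w j ∨ ¬R (w i) (w j)) :
    HeapLE R w i j ∨ HeapLE R w j i := by
  rcases le_total i j with hij | hji
  · exact .inl (.single ⟨hij, h⟩)
  · exact .inr (.single ⟨hji, h.imp Eq.symm fun hR h' => hR (hsymm h')⟩)

theorem eq_or_not_rel_of_cover (h : HeapLE R w i j) (hij : i ≠ j)
    (hcov : ¬∃ z, z ≠ i ∧ z ≠ j ∧ HeapLE R w i z ∧ HeapLE R w z j) :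
    w i = w j ∨ ¬R (w i) (w j) := by
  induction h using Relation.ReflTransGen.head_induction_on with
  | refl => exact absurd rfl hij
  | @head i c step rest ih =>
    by_cases hcj : c = j
    · exact hcj ▸ step.2
    by_cases hci : c = i
    · subst hci
      exact ih hij hcov
    exact absurd ⟨c, hci, hcj, .single step, rest⟩ hcov

end HeapLE

section LinearExtension

variable {S : Type*} {R : S → S → Prop} {m : ℕ}

def IsLinearExtension (R : S → S → Prop) (w : Fin m → S) (e : Fin m ≃ Fin m) : Prop :=
  ∀ i j, HeapLE R w i j → e i ≤ e j

def inversions (e : Fin m ≃ Fin m) : Finset (Fin m × Fin m) :=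
  {x | x.1 < x.2 ∧ e x.2 < e x.1}

variable {w : Fin m → S} {e : Fin m ≃ Fin m} {p q : Fin m}

theorem mem_inversions {x : Fin m × Fin m} :
    x ∈ inversions e ↔ x.1 < x.2 ∧ e x.2 < e x.1 := by
  simp [inversions]

theorem comp_symm_trans_swap :
    w ∘ (e.trans (Equiv.swap p q)).symm = (w ∘ e.symm) ∘ Equiv.swap p q := by
  ext
  simp

theorem IsLinearExtension.trans_swap (he : IsLinearExtension R w e) (hpq : (q : ℕ) = p + 1)
    (hnot : ¬HeapLE R w (e.symm p) (e.symm q)) :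
    IsLinearExtension R w (e.trans (Equiv.swap p q)) := by
  intro i j hij
  rcases (he i j hij).lt_or_eq with hlt | heq
  · refine (Fin.swap_lt_swap hpq hlt ?_).le
    rintro ⟨rfl, rfl⟩
    simp only [Equiv.symm_apply_apply] at hnot
    exact hnot hij
  · simp [heq]

theorem inversions_trans_swap_ssubset (hpq : (q : ℕ) = p + 1) (hdesc : e.symm q < e.symm p) :
    inversions (e.trans (Equiv.swap p q)) ⊂ inversions e := by
  have hpq' : p < q := Fin.lt_def.2 (by omega)
  rw [Finset.ssubset_iff_of_subset]
  · refine ⟨(e.symm q, e.symm p), by simp [mem_inversions, hdesc, hpq'], ?_⟩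
    simp [mem_inversions, hpq'.le]
  · rintro ⟨i, j⟩
    simp only [mem_inversions, Equiv.trans_apply]
    refine fun ⟨hij, hswap⟩ => ⟨hij, not_le.1 fun hle => hswap.not_gt ?_⟩
    refine Fin.swap_lt_swap hpq (hle.lt_of_ne (e.injective.ne hij.ne)) ?_
    rintro ⟨rfl, rfl⟩
    simp only [Equiv.symm_apply_apply] at hdesc
    exact hdesc.not_gt hij

theorem IsLinearExtension.commEquiv {e : Fin m ≃ Fin m} (he : IsLinearExtension R w e) :
    CommEquiv R (List.ofFn w) (List.ofFn (w ∘ e.symm)) := by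
  by_cases hmono : StrictMono e.symm
  · rw [Fin.equiv_eq_refl_of_strictMono hmono]
    exact .refl
  obtain ⟨p, q, hpq, hle⟩ := Fin.exists_le_of_not_strictMono hmono
  have hdesc : e.symm q < e.symm p :=
    hle.lt_of_ne (e.symm.injective.ne (Fin.ne_of_val_ne (by omega)))
  have hnot : ¬HeapLE R w (e.symm q) (e.symm p) := fun h => by
    simpa [hpq] using Fin.le_def.1 (he _ _ h)
  have hR : R (w (e.symm q)) (w (e.symm p)) := by
    by_contra hR
    exact hnot (.single ⟨hdesc.le, .inr hR⟩)
  have he' := he.trans_swap hpq fun h => hdesc.not_ge h.le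
  have hstep : SwapStep R (List.ofFn (w ∘ (e.trans (Equiv.swap p q)).symm))
      (List.ofFn (w ∘ e.symm)) := by
    rw [comp_symm_trans_swap, swapStep_ofFn_iff]
    refine ⟨p, q, hpq, by simpa using hR, ?_⟩
    ext1
    simp [Function.comp_assoc]
  exact he'.commEquiv.tail hstep
termination_by (inversions e).card
decreasing_by exact Finset.card_lt_card (inversions_trans_swap_ssubset hpq hdesc)

theorem IsLinearExtension.symm_apply_le {e₁ e₂ : Fin m ≃ Fin m}
    (h₂ : IsLinearExtension R w e₂)
    (hw : w (e₁.symm p) = w (e₂.symm p)) (heq : ∀ q < p, e₁.symm q = e₂.symm q) :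
    e₂.symm p ≤ e₁.symm p := by
  by_contra! hlt
  have hp : e₂ (e₁.symm p) ≤ p := by
    simpa using h₂ _ _ (.single ⟨hlt.le, .inl hw⟩)
  have hne : e₂ (e₁.symm p) ≠ p := fun h => hlt.ne (e₂.eq_symm_apply.2 h)
  have := heq _ (hp.lt_of_ne hne)
  rw [Equiv.symm_apply_apply] at this
  exact hne (e₁.symm.injective this)

theorem IsLinearExtension.eq_of_comp_symm_eq {e₁ e₂ : Fin m ≃ Fin m}
    (h₁ : IsLinearExtension R w e₁) (h₂ : IsLinearExtension R w e₂)
    (hw : w ∘ e₁.symm = w ∘ e₂.symm) : e₁ = e₂ := by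
  suffices ∀ p, e₁.symm p = e₂.symm p from Equiv.symm_bijective.injective (Equiv.ext this)
  intro p
  induction p using WellFoundedLT.induction with
  | _ p ih =>
    exact le_antisymm (h₁.symm_apply_le (congrFun hw p).symm fun q hq => (ih q hq).symm)
      (h₂.symm_apply_le (congrFun hw p) ih)

theorem IsLinearExtension.not_heapLE_of_rel (hirr : Irreflexive R) (he : IsLinearExtension R w e)
    (hpq : (q : ℕ) = p + 1) (hR : R (w (e.symm p)) (w (e.symm q))) :
    ¬HeapLE R w (e.symm p) (e.symm q) := by
  intro h
  have hne : e.symm p ≠ e.symm q := e.symm.injective.ne (Fin.ne_of_val_ne (by omega))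
  refine (h.eq_or_not_rel_of_cover hne ?_).elim (fun heq => hirr _ (heq ▸ hR)) (· hR)
  rintro ⟨z, hzp, hzq, hpz, hzq'⟩
  have h₁ : p < e z := by
    simpa using (he _ _ hpz).lt_of_ne (fun h => hzp (e.injective h.symm))
  have h₂ : e z < q := by
    simpa using (he _ _ hzq').lt_of_ne (fun h => hzq (e.injective h))
  rw [Fin.lt_def] at h₁ h₂
  omega

theorem exists_isLinearExtension_of_commEquiv (hirr : Irreflexive R) {v : List S}
    (hv : CommEquiv R (List.ofFn w) v) :
    ∃ e, IsLinearExtension R w e ∧ List.ofFn (w ∘ e.symm) = v := by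
  induction hv with
  | refl => exact ⟨Equiv.refl _, fun _ _ h => h.le, rfl⟩
  | tail _ hstep ih =>
    obtain ⟨e, he, rfl⟩ := ih
    obtain ⟨p, q, hpq, hR, rfl⟩ := swapStep_ofFn_iff.1 hstep
    exact ⟨_, he.trans_swap hpq (he.not_heapLE_of_rel hirr hpq hR),
      by rw [comp_symm_trans_swap]⟩

end LinearExtension

/-- The heap order of a word `w` is a partial order, is a word poset (axioms (a) and (b)),
and its linear extensions correspond bijectively via `e ↦ w(e)` to the commutation class
of `w`. -/
theorem stmt3 {S : Type*} (R : S → S → Prop) (hsymm : Symmetric R) (hirr : Irreflexive R)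
    {m : ℕ} (w : Fin m → S) :
    IsPartialOrder (Fin m) (HeapLE R w) ∧
    (∀ i j : Fin m, (w i = w j ∨ ¬ R (w i) (w j)) → HeapLE R w i j ∨ HeapLE R w j i) ∧
    (∀ i j : Fin m, HeapLE R w i j → i ≠ j →
        (¬ ∃ z : Fin m, z ≠ i ∧ z ≠ j ∧ HeapLE R w i z ∧ HeapLE R w z j) →
        w i = w j ∨ ¬ R (w i) (w j)) ∧
    Set.BijOn (fun e : Fin m ≃ Fin m => List.ofFn fun i => w (e.symm i))
      {e : Fin m ≃ Fin m | ∀ i j, HeapLE R w i j → e i ≤ e j}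
      {v : List S | CommEquiv R (List.ofFn w) v} :=
  ⟨HeapLE.isPartialOrder, fun _ _ => HeapLE.total_of_eq_or_not_rel hsymm,
    fun _ _ h hne hcov => h.eq_or_not_rel_of_cover hne hcov,
    fun _ he => IsLinearExtension.commEquiv he,
    fun _ h₁ _ h₂ hw => IsLinearExtension.eq_of_comp_symm_eq h₁ h₂ (List.ofFn_injective hw),
    fun _ hv => exists_isLinearExtension_of_commEquiv hirr hv⟩
end
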